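/- arXiv:1111.2477 — 2 statements merged into one kernel-verified Lean document; each statement's English description precedes it below -/
import Mathlib

section
/- If C is a (1,≤2)-identifying code of the king grid and a frame F contains exactly four elements of C, then these four elements are exactly the four corners of F. -/
open Filter

/-- Closed neighbourhood of a vertex in the king grid: `v` together with all vertices
differing from `v` by at most `1` in each coordinate. -/
def kingN (v : ℤ × ℤ) : Set (ℤ × ℤ) := {u | |u.1 - v.1| ≤ 1 ∧ |u.2 - v.2| ≤ 1}

/-- Closed neighbourhood of a set of vertices. -/
def kingNS (X : Set (ℤ × ℤ)) : Set (ℤ × ℤ) := ⋃ v ∈ X, kingN v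

/-- `C ⊆ ℤ²` is a `(1, ≤ ℓ)`-identifying code in the king grid. -/
def IsIdCode (ℓ : ℕ) (C : Set (ℤ × ℤ)) : Prop :=
  ∀ X Y : Set (ℤ × ℤ), X.Finite → Y.Finite → X.ncard ≤ ℓ → Y.ncard ≤ ℓ → X ≠ Y →
    kingNS X ∩ C ≠ kingNS Y ∩ C

/-- The square `Q_n = {(x,y) : |x| ≤ n, |y| ≤ n}`. -/
noncomputable def Qn (n : ℕ) : Finset (ℤ × ℤ) := Finset.Icc (-(n : ℤ), -(n : ℤ)) ((n : ℤ), (n : ℤ))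

/-- The density of a code `C ⊆ ℤ²`. -/
noncomputable def density (C : Set (ℤ × ℤ)) : ℝ :=
  Filter.atTop.limsup fun n : ℕ =>
    ((C ∩ (Qn n : Set (ℤ × ℤ))).ncard : ℝ) / ((Qn n).card : ℝ)

/-- `n(X, C)`: the average number of codewords of `C` in the translates of `X`. -/
noncomputable def avgCount (X C : Set (ℤ × ℤ)) : ℝ :=
  Filter.atTop.limsup fun n : ℕ =>
    (∑ v ∈ Qn n, ((C ∩ ((fun u => v + u) '' X)).ncard : ℝ)) / ((Qn n).card : ℝ)

/-- The frame at `v`: the 12-element set `{v+(a,b) : a,b ∈ {0,1,2,3}, a ∈ {0,3} or b ∈ {0,3}}`. -/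
noncomputable def frame (v : ℤ × ℤ) : Finset (ℤ × ℤ) :=
  (((Finset.Icc (0 : ℤ) 3) ×ˢ (Finset.Icc (0 : ℤ) 3)).filter
      fun p => p.1 = 0 ∨ p.1 = 3 ∨ p.2 = 0 ∨ p.2 = 3).image fun p => v + p

/-- The number of codewords of `C` in the frame at `v`. -/
noncomputable def frameCount (C : Set (ℤ × ℤ)) (v : ℤ × ℤ) : ℕ :=
  (C ∩ (frame v : Set (ℤ × ℤ))).ncard

/-- The four corners of the frame at `v`. -/
def corners (v : ℤ × ℤ) : Finset (ℤ × ℤ) :=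
  {v + (0, 0), v + (3, 0), v + (0, 3), v + (3, 3)}

/-- The four sides of the frame at `v`. -/
def sides (v : ℤ × ℤ) : Finset (Finset (ℤ × ℤ)) :=
  { {v + (0, 0), v + (1, 0), v + (2, 0), v + (3, 0)},
    {v + (0, 3), v + (1, 3), v + (2, 3), v + (3, 3)},
    {v + (0, 0), v + (0, 1), v + (0, 2), v + (0, 3)},
    {v + (3, 0), v + (3, 1), v + (3, 2), v + (3, 3)} }

/-- Offsets at (frame-lattice) distance at most 2, i.e. the 2-ball of the origin. -/
noncomputable def ball2 : Finset (ℤ × ℤ) := Finset.Icc (-2, -2) (2, 2)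

/-- Offsets at (frame-lattice) distance exactly 1. -/
noncomputable def sphere1 : Finset (ℤ × ℤ) := (Finset.Icc (-1, -1) (1, 1)).erase (0, 0)

/-- Offsets at (frame-lattice) distance exactly 2. -/
noncomputable def sphere2 : Finset (ℤ × ℤ) := Finset.Icc (-2, -2) (2, 2) \ Finset.Icc (-1, -1) (1, 1)

/-- The number of offsets `d ∈ S` satisfying the property `P`. -/
noncomputable def countFrames (S : Finset (ℤ × ℤ)) (P : ℤ × ℤ → Prop) : ℕ :=
  {d | d ∈ S ∧ P d}.ncard

/-- The four offsets `(2,0), (−2,0), (0,2), (0,−2)`. -/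
def offsets4 : Finset (ℤ × ℤ) := {(2, 0), (-2, 0), (0, 2), (0, -2)}

/-- A 4-benefactor: a `6⁺`-frame one of whose four translates by `(±2,0), (0,±2)`
is a 4-frame. -/
def Benefactor4 (C : Set (ℤ × ℤ)) (v : ℤ × ℤ) : Prop :=
  6 ≤ frameCount C v ∧ ∃ d ∈ offsets4, frameCount C (v + d) = 4

/-- A 1-poor frame: a 5-frame having at most one 6-frame in its 2-ball. -/
def OnePoor (C : Set (ℤ × ℤ)) (v : ℤ × ℤ) : Prop :=
  frameCount C v = 5 ∧ countFrames ball2 (fun d => frameCount C (v + d) = 6) ≤ 1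

/-- A 2-poor frame: a 5-frame with no `6⁺`-frame at distance 1 and at most two 6-frames
at distance 2. -/
def TwoPoor (C : Set (ℤ × ℤ)) (v : ℤ × ℤ) : Prop :=
  frameCount C v = 5 ∧ (∀ d ∈ sphere1, frameCount C (v + d) < 6) ∧
    countFrames sphere2 (fun d => frameCount C (v + d) = 6) ≤ 2

/-- A 1-poor-benefactor: a 6-frame at distance 1 from some 1-poor frame which has at most
two 1-poor frames in its 2-ball, each of them at distance 1, has at least two `6⁺`-frames
at distance 2, and is not a 4-benefactor. -/
def OnePoorBenefactor (C : Set (ℤ × ℤ)) (w : ℤ × ℤ) : Prop :=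
  frameCount C w = 6 ∧ (∃ e ∈ sphere1, OnePoor C (w + e)) ∧
    countFrames ball2 (fun e => OnePoor C (w + e)) ≤ 2 ∧
    (∀ e ∈ ball2, OnePoor C (w + e) → e ∈ sphere1) ∧
    2 ≤ countFrames sphere2 (fun e => 6 ≤ frameCount C (w + e)) ∧
    ¬ Benefactor4 C w


/-! Translating `C`, we may take the frame at the origin; its interior is the square `{1,2}²`.
For distinct interior points `x`, `y` the code separates `{x}` from `{x, y}`, so it meets
`N[y] \ N[x]`, which for orthogonal neighbours is three consecutive points of one side of the frame.
Separating `{(1,1), (2,2)}` from `{(1,2), (2,1)}` puts a codeword at a corner, since the symmetric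
difference of their neighbourhoods is the set of corners. Every frame point lies in at most two of
the eight side triples, so four codewords meeting all of them meet each exactly once; a codeword at
a corner then forces codewords at both adjacent corners, hence at all four. -/

@[simp]
lemma kingNS_singleton (x : ℤ × ℤ) : kingNS {x} = kingN x := Set.biUnion_singleton x kingN

@[simp]
lemma kingNS_pair (x y : ℤ × ℤ) : kingNS {x, y} = kingN x ∪ kingN y := Set.biUnion_pair x y kingN

lemma kingN_add (v x : ℤ × ℤ) : kingN (v + x) = (v + ·) '' kingN x := by
  ext u
  simp only [kingN, Set.image_add_left, Set.mem_ofPred_eq, Set.mem_preimage, Prod.fst_add,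
    Prod.snd_add, Prod.fst_neg, Prod.snd_neg]
  ring_nf

lemma kingNS_image_add (v : ℤ × ℤ) (X : Set (ℤ × ℤ)) :
    kingNS ((v + ·) '' X) = (v + ·) '' kingNS X := by
  simp only [kingNS, Set.biUnion_image, kingN_add, Set.image_iUnion₂]

theorem IsIdCode.preimage_add {ℓ : ℕ} {C : Set (ℤ × ℤ)} (hC : IsIdCode ℓ C) (v : ℤ × ℤ) :
    IsIdCode ℓ ((v + ·) ⁻¹' C) := by
  intro X Y hX hY hXℓ hYℓ hXY hXY'
  have hinj : Function.Injective (v + · : ℤ × ℤ → ℤ × ℤ) := add_right_injective v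
  refine hC _ _ (hX.image _) (hY.image _) (by rwa [Set.ncard_image_of_injective _ hinj])
    (by rwa [Set.ncard_image_of_injective _ hinj]) ((Set.image_injective.2 hinj).ne hXY) ?_
  rw [kingNS_image_add, kingNS_image_add, ← Set.image_inter_preimage, ← Set.image_inter_preimage,
    hXY']

theorem IsIdCode.exists_mem_symmDiff {ℓ : ℕ} {C : Set (ℤ × ℤ)} (hC : IsIdCode ℓ C)
    {X Y : Set (ℤ × ℤ)} (hX : X.Finite) (hY : Y.Finite) (hXℓ : X.ncard ≤ ℓ) (hYℓ : Y.ncard ≤ ℓ)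
    (hXY : X ≠ Y) : ∃ c ∈ C, c ∈ symmDiff (kingNS X) (kingNS Y) := by
  by_contra! h
  refine hC X Y hX hY hXℓ hYℓ hXY (Set.ext fun c => ?_)
  have := h c
  simp only [Set.mem_symmDiff, Set.mem_inter_iff] at this ⊢
  tauto

theorem IsIdCode.exists_mem_kingN_diff {ℓ : ℕ} {C : Set (ℤ × ℤ)} (hC : IsIdCode ℓ C)
    (hℓ : 2 ≤ ℓ) {x y : ℤ × ℤ} (hxy : x ≠ y) : ∃ c ∈ C, c ∈ kingN y \ kingN x := by
  have hne : ({x} : Set (ℤ × ℤ)) ≠ {x, y} := by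
    intro h
    exact hxy (Set.mem_singleton_iff.1 (h ▸ Set.mem_insert_of_mem x rfl : y ∈ ({x} : Set _))).symm
  obtain ⟨c, hcC, hc⟩ := hC.exists_mem_symmDiff (Set.toFinite _) (Set.toFinite _)
    (by rw [Set.ncard_singleton]; omega) ((Set.ncard_pair hxy).trans_le hℓ) hne
  simp only [kingNS_singleton, kingNS_pair, Set.mem_symmDiff, Set.mem_union] at hc
  exact ⟨c, hcC, by tauto⟩

theorem IsIdCode.exists_mem_symmDiff_kingN_pair {ℓ : ℕ} {C : Set (ℤ × ℤ)} (hC : IsIdCode ℓ C)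
    (hℓ : 2 ≤ ℓ) {x₁ x₂ y₁ y₂ : ℤ × ℤ} (hne : ({x₁, x₂} : Set (ℤ × ℤ)) ≠ {y₁, y₂}) :
    ∃ c ∈ C, c ∈ symmDiff (kingN x₁ ∪ kingN x₂) (kingN y₁ ∪ kingN y₂) := by
  simpa using hC.exists_mem_symmDiff (Set.toFinite _) (Set.toFinite _)
    ((Set.ncard_insert_le _ _).trans (by simpa using hℓ))
    ((Set.ncard_insert_le _ _).trans (by simpa using hℓ)) hne

instance decidableMemKingN (v : ℤ × ℤ) : DecidablePred (· ∈ kingN v) := fun u =>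
  inferInstanceAs (Decidable (|u.1 - v.1| ≤ 1 ∧ |u.2 - v.2| ≤ 1))

noncomputable def innerSquare : Finset (ℤ × ℤ) := Finset.Icc 1 2 ×ˢ Finset.Icc 1 2

lemma coe_frame (v : ℤ × ℤ) : (frame v : Set (ℤ × ℤ)) = (v + ·) '' frame 0 := by
  simp only [frame, Finset.coe_image, Set.image_image, zero_add]

lemma coe_corners (v : ℤ × ℤ) : (corners v : Set (ℤ × ℤ)) = (v + ·) '' corners 0 := by
  simp [corners, Set.image_insert_eq]

lemma mem_frame_zero {c : ℤ × ℤ} : c ∈ frame 0 ↔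
    (0 ≤ c.1 ∧ c.1 ≤ 3 ∧ 0 ≤ c.2 ∧ c.2 ≤ 3) ∧ (c.1 = 0 ∨ c.1 = 3 ∨ c.2 = 0 ∨ c.2 = 3) := by
  simp [frame, and_assoc]

lemma corners_subset_frame_zero : corners 0 ⊆ frame 0 := by decide

lemma kingN_diff_kingN_subset_frame_zero {x y : ℤ × ℤ} (hx : x ∈ innerSquare)
    (hy : y ∈ innerSquare) : kingN y \ kingN x ⊆ frame 0 := by
  intro c hc
  simp only [innerSquare, Finset.mem_product, Finset.mem_Icc] at hx hy
  simp only [kingN, Set.mem_sdiff, Set.mem_ofPred_eq, abs_le] at hc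
  rw [Finset.mem_coe, mem_frame_zero]
  omega

lemma symmDiff_kingN_diagonals_subset_corners :
    symmDiff (kingN (1, 1) ∪ kingN (2, 2)) (kingN (1, 2) ∪ kingN (2, 1)) ⊆ corners 0 := by
  intro c hc
  simp only [kingN, Set.mem_symmDiff, Set.mem_union, Set.mem_ofPred_eq, abs_le] at hc
  simp only [corners, Finset.coe_insert, Finset.coe_singleton, Set.mem_insert_iff,
    Set.mem_singleton_iff, zero_add, Prod.ext_iff]
  omega

lemma pair_diagonal_ne_pair_antidiagonal :
    ({(1, 1), (2, 2)} : Set (ℤ × ℤ)) ≠ {(1, 2), (2, 1)} := by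
  intro h
  have : ((1, 1) : ℤ × ℤ) ∈ ({(1, 2), (2, 1)} : Set (ℤ × ℤ)) := h ▸ Set.mem_insert _ _
  simp at this

set_option maxRecDepth 4000 in
theorem eq_corners_zero_of_separating {S : Finset (ℤ × ℤ)} (hS : S ⊆ frame 0)
    (hcard : S.card = 4)
    (hsep : ∀ x ∈ innerSquare, ∀ y ∈ innerSquare, x ≠ y → ∃ c ∈ S, c ∈ kingN y \ kingN x)
    (hcorner : ∃ c ∈ S, c ∈ corners 0) : S = corners 0 := by
  have key : ∀ S ∈ (frame 0).powersetCard 4,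
      (∀ x ∈ innerSquare, ∀ y ∈ innerSquare, x ≠ y → ∃ c ∈ S, c ∈ kingN y \ kingN x) →
      (∃ c ∈ S, c ∈ corners 0) → S = corners 0 := by
    -- the counting argument of the header, checked on all 495 four-subsets of the frame
    decide
  exact key S (Finset.mem_powersetCard.2 ⟨hS, hcard⟩) hsep hcorner

theorem inter_frame_zero_eq_corners {C : Set (ℤ × ℤ)} (hC : IsIdCode 2 C)
    (h4 : frameCount C 0 = 4) : C ∩ (frame 0 : Set (ℤ × ℤ)) = (corners 0 : Set (ℤ × ℤ)) := by
  classical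
  set S := (frame 0).filter (· ∈ C)
  have hS : (S : Set (ℤ × ℤ)) = C ∩ frame 0 := by
    ext c
    simp [S, and_comm]
  have hsep : ∀ x ∈ innerSquare, ∀ y ∈ innerSquare, x ≠ y → ∃ c ∈ S, c ∈ kingN y \ kingN x := by
    intro x hx y hy hxy
    obtain ⟨c, hcC, hc⟩ := hC.exists_mem_kingN_diff le_rfl hxy
    exact ⟨c, Finset.mem_filter.2 ⟨kingN_diff_kingN_subset_frame_zero hx hy hc, hcC⟩, hc⟩
  have hcorner : ∃ c ∈ S, c ∈ corners 0 := by
    obtain ⟨c, hcC, hc⟩ :=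
      hC.exists_mem_symmDiff_kingN_pair le_rfl pair_diagonal_ne_pair_antidiagonal
    have hc' := symmDiff_kingN_diagonals_subset_corners hc
    exact ⟨c, Finset.mem_filter.2 ⟨corners_subset_frame_zero hc', hcC⟩, hc'⟩
  have hcard : S.card = 4 := by
    rwa [frameCount, ← hS, Set.ncard_coe_finset] at h4
  rw [← hS, eq_corners_zero_of_separating (S := S) (Finset.filter_subset _ _) hcard hsep hcorner]

/-- If a frame contains exactly four codewords of a `(1, ≤ 2)`-identifying code, then
these codewords are exactly the four corners of the frame. -/
theorem four_frame_codewords_eq_corners (C : Set (ℤ × ℤ)) (hC : IsIdCode 2 C) (v : ℤ × ℤ)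
    (h4 : frameCount C v = 4) :
    C ∩ (frame v : Set (ℤ × ℤ)) = (corners v : Set (ℤ × ℤ)) := by
  have h4' : frameCount ((v + ·) ⁻¹' C) 0 = 4 := by
    rwa [frameCount, ← Set.ncard_image_of_injective _ (add_right_injective v),
      Set.image_preimage_inter, ← coe_frame]
  rw [coe_frame, ← Set.image_preimage_inter, inter_frame_zero_eq_corners (hC.preimage_add v) h4',
    coe_corners v]
end

section
/- Let C be a (1,≤2)-identifying code of the king grid. If a frame F contains exactly two corner elements of C and these lie on opposite corners (i.e., they are the corners v+(0,0) and v+(3,3), or the corners v+(3,0) and v+(0,3), of the frame at v), then F contains at least six elements of C (i.e., F is a 6^+-frame). -/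
open Filter

/-! A `(1, ≤ 2)`-identifying code separates `{u}` from `{u, w}`, so some codeword lies in
`N[w] \ N[u]`; for `w` directly above `u` these are the three cells of the row above `w`. Placing
them on a corner of a frame that is not a codeword and the two middle cells of a side forces a
codeword into the middle of that side. When the two corner codewords are opposite, every side has a
corner that is not a codeword, so the sides add four codewords to the two corner ones. -/

lemma mem_kingN_iff {c w : ℤ × ℤ} :
    c ∈ kingN w ↔ w.1 - 1 ≤ c.1 ∧ c.1 ≤ w.1 + 1 ∧ w.2 - 1 ≤ c.2 ∧ c.2 ≤ w.2 + 1 := by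
  simp only [kingN, Set.mem_ofPred_eq, abs_le]
  omega

lemma mem_frame_iff {c v : ℤ × ℤ} :
    c ∈ frame v ↔ (v.1 ≤ c.1 ∧ c.1 ≤ v.1 + 3 ∧ v.2 ≤ c.2 ∧ c.2 ≤ v.2 + 3) ∧
      (c.1 = v.1 ∨ c.1 = v.1 + 3 ∨ c.2 = v.2 ∨ c.2 = v.2 + 3) := by
  simp only [frame, Finset.mem_image, Finset.mem_filter, Finset.mem_product, Finset.mem_Icc,
    Prod.ext_iff, Prod.fst_add, Prod.snd_add]
  constructor
  · rintro ⟨p, hp, h1, h2⟩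
    omega
  · intro h
    exact ⟨(c.1 - v.1, c.2 - v.2), by omega, by omega, by omega⟩

lemma mem_corners_iff {c v : ℤ × ℤ} :
    c ∈ corners v ↔ (c.1 = v.1 ∨ c.1 = v.1 + 3) ∧ (c.2 = v.2 ∨ c.2 = v.2 + 3) := by
  simp only [corners, Finset.mem_insert, Finset.mem_singleton, Prod.ext_iff, Prod.fst_add,
    Prod.snd_add]
  omega

lemma corners_subset_frame (v : ℤ × ℤ) : corners v ⊆ frame v := fun c hc => by
  rw [mem_corners_iff] at hc
  rw [mem_frame_iff]
  omega

lemma ncard_inter_corners_add_card_le_frameCount {C : Set (ℤ × ℤ)} {v : ℤ × ℤ}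
    {M : Finset (ℤ × ℤ)} (hM : (M : Set (ℤ × ℤ)) ⊆ C ∩ (frame v \ corners v : Set (ℤ × ℤ))) :
    (C ∩ (corners v : Set (ℤ × ℤ))).ncard + M.card ≤ frameCount C v := by
  have hdisj : Disjoint (C ∩ (corners v : Set (ℤ × ℤ))) M :=
    Set.disjoint_left.mpr fun c hc hcM => (hM hcM).2.2 hc.2
  rw [← Set.ncard_coe_finset, ← Set.ncard_union_eq hdisj (Set.toFinite _)]
  refine Set.ncard_le_ncard (Set.union_subset ?_ fun c hc => ⟨(hM hc).1, (hM hc).2.1⟩)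
    ((frame v).finite_toSet.inter_of_right C)
  exact Set.inter_subset_inter_right C (Finset.coe_subset.mpr (corners_subset_frame v))

lemma Set.notMem_of_ncard_eq_two {α : Type*} {S : Set α} (hS : S.ncard = 2) {p q r : α}
    (hp : p ∈ S) (hq : q ∈ S) (hpq : p ≠ q) (hrp : r ≠ p) (hrq : r ≠ q) : r ∉ S := by
  obtain ⟨a, b, -, rfl⟩ := Set.ncard_eq_two.mp hS
  simp only [Set.mem_insert_iff, Set.mem_singleton_iff] at hp hq ⊢
  grind

lemma other_corners_notMem_of_ncard_eq_two {C : Set (ℤ × ℤ)} {x y : ℤ}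
    (h2 : (C ∩ (corners (x, y) : Set (ℤ × ℤ))).ncard = 2)
    (hopp : ((x, y) ∈ C ∧ (x + 3, y + 3) ∈ C) ∨ ((x + 3, y) ∈ C ∧ (x, y + 3) ∈ C)) :
    ((x + 3, y) ∉ C ∧ (x, y + 3) ∉ C) ∨ ((x, y) ∉ C ∧ (x + 3, y + 3) ∉ C) := by
  have hcorner {p q k : ℤ × ℤ} (hp : p ∈ C) (hq : q ∈ C) (hpc : p ∈ corners (x, y))
      (hqc : q ∈ corners (x, y)) (hkc : k ∈ corners (x, y)) (hpq : p ≠ q) (hkp : k ≠ p)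
      (hkq : k ≠ q) : k ∉ C := fun hk =>
    Set.notMem_of_ncard_eq_two h2 ⟨hp, hpc⟩ ⟨hq, hqc⟩ hpq hkp hkq ⟨hk, hkc⟩
  rcases hopp with ⟨hp, hq⟩ | ⟨hp, hq⟩ <;> [left; right] <;> constructor <;>
    exact hcorner hp hq (by simp [corners]) (by simp [corners]) (by simp [corners])
      (by simp) (by simp) (by simp)

namespace IsIdCode

variable {C : Set (ℤ × ℤ)}

theorem exists_mem_kingN_diff_s17 {ℓ : ℕ} (hC : IsIdCode ℓ C) (hℓ : 2 ≤ ℓ) {u w : ℤ × ℤ}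
    (huw : u ≠ w) : ∃ c ∈ C, c ∈ kingN w ∧ c ∉ kingN u := by
  have hsep := hC {u} {u, w} (Set.finite_singleton u) ((Set.finite_singleton w).insert u)
    (by simp; omega) ((Set.ncard_insert_le u {w}).trans (by simp; omega))
    fun h => huw (Set.mem_singleton_iff.mp (h ▸ Set.mem_insert_of_mem u rfl)).symm
  simp only [kingNS, Set.mem_singleton_iff, Set.iUnion_iUnion_eq_left, Set.mem_insert_iff,
    Set.iUnion_iUnion_eq_or_left] at hsep
  by_contra! h
  exact hsep (Set.ext fun c => ⟨fun hc => ⟨Or.inl hc.1, hc.2⟩,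
    fun ⟨hc, hcC⟩ => ⟨hc.elim id fun hcw => h c hcC hcw, hcC⟩⟩)

variable (hC : IsIdCode 2 C)
include hC

theorem exists_mem_row_middle {x r : ℤ}
    (hcorner : (x, r) ∉ C ∨ (x + 3, r) ∉ C) :
    ∃ c ∈ C, c.2 = r ∧ (c.1 = x + 1 ∨ c.1 = x + 2) := by
  rcases hcorner with hk | hk
  · obtain ⟨c, hc, hw, hu⟩ := hC.exists_mem_kingN_diff_s17 le_rfl
      (u := (x + 1, r - 2)) (w := (x + 1, r - 1)) (by simp)
    have hck : c ≠ _ := ne_of_mem_of_not_mem hc hk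
    simp only [mem_kingN_iff, Ne, Prod.ext_iff] at hw hu hck
    exact ⟨c, hc, by omega⟩
  · obtain ⟨c, hc, hw, hu⟩ := hC.exists_mem_kingN_diff_s17 le_rfl
      (u := (x + 2, r - 2)) (w := (x + 2, r - 1)) (by simp)
    have hck : c ≠ _ := ne_of_mem_of_not_mem hc hk
    simp only [mem_kingN_iff, Ne, Prod.ext_iff] at hw hu hck
    exact ⟨c, hc, by omega⟩

theorem exists_mem_col_middle {y r : ℤ}
    (hcorner : (r, y) ∉ C ∨ (r, y + 3) ∉ C) :
    ∃ c ∈ C, c.1 = r ∧ (c.2 = y + 1 ∨ c.2 = y + 2) := by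
  rcases hcorner with hk | hk
  · obtain ⟨c, hc, hw, hu⟩ := hC.exists_mem_kingN_diff_s17 le_rfl
      (u := (r - 2, y + 1)) (w := (r - 1, y + 1)) (by simp)
    have hck : c ≠ _ := ne_of_mem_of_not_mem hc hk
    simp only [mem_kingN_iff, Ne, Prod.ext_iff] at hw hu hck
    exact ⟨c, hc, by omega⟩
  · obtain ⟨c, hc, hw, hu⟩ := hC.exists_mem_kingN_diff_s17 le_rfl
      (u := (r - 2, y + 2)) (w := (r - 1, y + 2)) (by simp)
    have hck : c ≠ _ := ne_of_mem_of_not_mem hc hk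
    simp only [mem_kingN_iff, Ne, Prod.ext_iff] at hw hu hck
    exact ⟨c, hc, by omega⟩

end IsIdCode

/-- If a frame contains exactly two corner codewords which lie on opposite corners, then
it is a `6⁺`-frame. -/
theorem opposite_corner_codewords (C : Set (ℤ × ℤ)) (hC : IsIdCode 2 C) (v : ℤ × ℤ)
    (h2 : (C ∩ (corners v : Set (ℤ × ℤ))).ncard = 2)
    (hopp : (v + ((0 : ℤ), (0 : ℤ)) ∈ C ∧ v + ((3 : ℤ), (3 : ℤ)) ∈ C) ∨
      (v + ((3 : ℤ), (0 : ℤ)) ∈ C ∧ v + ((0 : ℤ), (3 : ℤ)) ∈ C)) :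
    6 ≤ frameCount C v := by
  obtain ⟨x, y⟩ := v
  simp only [Prod.mk_add_mk, add_zero] at hopp
  have hmissing := other_corners_notMem_of_ncard_eq_two h2 hopp
  obtain ⟨t, htC, ht⟩ := hC.exists_mem_row_middle (x := x) (r := y + 3) (by tauto)
  obtain ⟨b, hbC, hb⟩ := hC.exists_mem_row_middle (x := x) (r := y) (by tauto)
  obtain ⟨l, hlC, hl⟩ := hC.exists_mem_col_middle (y := y) (r := x) (by tauto)
  obtain ⟨r, hrC, hr⟩ := hC.exists_mem_col_middle (y := y) (r := x + 3) (by tauto)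
  have hmiddle : (({t, b, l, r} : Finset (ℤ × ℤ)) : Set (ℤ × ℤ)) ⊆
      C ∩ (frame (x, y) \ corners (x, y) : Set (ℤ × ℤ)) := by
    simp only [Finset.coe_insert, Finset.coe_singleton, Set.insert_subset_iff,
      Set.singleton_subset_iff, Set.mem_inter_iff, Set.mem_sdiff, Finset.mem_coe, mem_frame_iff,
      mem_corners_iff]
    refine ⟨⟨htC, ?_, ?_⟩, ⟨hbC, ?_, ?_⟩, ⟨hlC, ?_, ?_⟩, hrC, ?_, ?_⟩
    all_goals omega
  have hcard : ({t, b, l, r} : Finset (ℤ × ℤ)).card = 4 := by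
    rw [Finset.card_eq_four]
    refine ⟨t, b, l, r, ?_⟩
    simp only [Ne, Prod.ext_iff, and_true]
    omega
  have := ncard_inter_corners_add_card_le_frameCount hmiddle
  omega
end
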